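/- arXiv:2303.05493 — 5 statements merged into one kernel-verified Lean document; each statement's English description precedes it below -/
import Mathlib

section
/- Let A, B, C be commutative rings, i* : A → B and j* : A → C ring homomorphisms with j* surjective, and i_* : B → A an additive map such that ker(j*) = i_*(B) and i*(i_*(b)) = c·b for all b ∈ B, where c is a fixed element of B. Then: (1) there is a well-defined ring homomorphism C → B/(c) sending j*(a) to the class of i*(a); (2) the induced ring homomorphism ζ : A → B ×_{B/(c)} C, a ↦ (i*(a), j*(a)), into the fiber product is surjective, and ker(ζ) = i_*(Ann_B(c)), where Ann_B(c) = {b ∈ B : c·b = 0}. In particular, if c is a non-zero-divisor in B, then ζ is a ring isomorphism. -/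
/-!
Since `ker j* = i_*(B)` and `i* i_* = c · _`, the composite `A → B → B/(c)` kills `ker j*`, so it
factors through the surjection `j*`. Given `(b, x)` in the fibre product, lift `x` to `a₀`; then
`b - i* a₀ = c t` for some `t`, and `a₀ + i_* t` maps to `(b, x)`. An element killed by both `i*`
and `j*` is `i_* b` with `c b = i* i_* b = 0`.
-/

section Gluing

variable {A B C : Type*} [CommRing A] [CommRing B] [CommRing C]
  (istar : A →+* B) (jstar : A →+* C) (ipush : B →+ A) {c : B}

theorem ker_le_ker_mk_comp (hsub : ∀ a, jstar a = 0 → a ∈ Set.range ipush)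
    (hself : ∀ b, istar (ipush b) = c * b) :
    RingHom.ker jstar ≤ RingHom.ker ((Ideal.Quotient.mk (Ideal.span {c})).comp istar) := by
  intro a ha
  obtain ⟨b, rfl⟩ := hsub a ha
  rw [RingHom.mem_ker, RingHom.comp_apply, Ideal.Quotient.eq_zero_iff_mem, hself]
  exact Ideal.mem_span_singleton.mpr ⟨b, rfl⟩

theorem exists_map_eq_of_mk_eq_mk (hpush : ∀ b, jstar (ipush b) = 0)
    (hself : ∀ b, istar (ipush b) = c * b) {b : B} {a₀ : A}
    (h : Ideal.Quotient.mk (Ideal.span {c}) b = Ideal.Quotient.mk (Ideal.span {c}) (istar a₀)) :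
    ∃ a : A, istar a = b ∧ jstar a = jstar a₀ := by
  obtain ⟨t, ht⟩ := Ideal.mem_span_singleton.mp (Ideal.Quotient.eq.mp h)
  refine ⟨a₀ + ipush t, ?_, ?_⟩
  · rw [map_add, hself, ← ht, add_sub_cancel]
  · rw [map_add, hpush, add_zero]

theorem setOf_map_eq_zero_eq_image_annihilator
    (hker : ∀ a, jstar a = 0 ↔ a ∈ Set.range ipush) (hself : ∀ b, istar (ipush b) = c * b) :
    {a : A | istar a = 0 ∧ jstar a = 0} = ipush '' {b : B | c * b = 0} := by
  ext a
  constructor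
  · rintro ⟨hi, hj⟩
    obtain ⟨b, rfl⟩ := (hker a).mp hj
    exact ⟨b, (hself b).symm.trans hi, rfl⟩
  · rintro ⟨b, hcb, rfl⟩
    exact ⟨(hself b).trans hcb, (hker _).mpr ⟨b, rfl⟩⟩

theorem eq_zero_of_map_eq_zero (hsub : ∀ a, jstar a = 0 → a ∈ Set.range ipush)
    (hself : ∀ b, istar (ipush b) = c * b) (hreg : ∀ b, c * b = 0 → b = 0) {a : A}
    (hi : istar a = 0) (hj : jstar a = 0) : a = 0 := by
  obtain ⟨b, rfl⟩ := hsub a hj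
  rw [hreg b ((hself b).symm.trans hi), map_zero]

end Gluing

/-- **Gluing lemma for Chow rings (abstract form).**
Let `A, B, C` be commutative rings, `istar : A → B` and `jstar : A → C` ring homomorphisms
with `jstar` surjective, and `ipush : B → A` an additive map with `ker jstar = ipush(B)` and
`istar (ipush b) = c * b` for a fixed `c : B`.  Then:
(1) there is a well-defined ring homomorphism `C → B/(c)` sending `jstar a` to the class of
`istar a`; (2) the induced map `ζ : A → B ×_{B/(c)} C`, `a ↦ (istar a, jstar a)`, is surjective
onto the fiber product and its kernel is `ipush (Ann_B c)`; in particular if `c` is a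
non-zero-divisor then `ζ` is a ring isomorphism (it is also injective). -/
theorem stmt0 {A B C : Type} [CommRing A] [CommRing B] [CommRing C]
    (istar : A →+* B) (jstar : A →+* C) (hj : Function.Surjective jstar)
    (ipush : B →+ A) (c : B)
    (hker : ∀ a : A, jstar a = 0 ↔ a ∈ Set.range ipush)
    (hself : ∀ b : B, istar (ipush b) = c * b) :
    ∃ φ : C →+* B ⧸ Ideal.span {c},
      (∀ a : A, φ (jstar a) = Ideal.Quotient.mk (Ideal.span {c}) (istar a)) ∧
      (∀ (b : B) (x : C), Ideal.Quotient.mk (Ideal.span {c}) b = φ x →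
          ∃ a : A, istar a = b ∧ jstar a = x) ∧
      ({a : A | istar a = 0 ∧ jstar a = 0} = ipush '' {b : B | c * b = 0}) ∧
      ((∀ b : B, c * b = 0 → b = 0) →
        ∀ a : A, istar a = 0 → jstar a = 0 → a = 0) := by
  have hsub : ∀ a, jstar a = 0 → a ∈ Set.range ipush := fun a => (hker a).mp
  have hpush : ∀ b, jstar (ipush b) = 0 := fun b => (hker _).mpr ⟨b, rfl⟩
  let φ := jstar.liftOfSurjective hj ⟨_, ker_le_ker_mk_comp istar jstar ipush hsub hself⟩
  have hφ : ∀ a, φ (jstar a) = Ideal.Quotient.mk (Ideal.span {c}) (istar a) :=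
    jstar.liftOfSurjective_comp_apply hj _
  refine ⟨φ, hφ, fun b x hbx => ?_,
    setOf_map_eq_zero_eq_image_annihilator istar jstar ipush hker hself,
    fun hreg a => eq_zero_of_map_eq_zero istar jstar ipush hsub hself hreg⟩
  obtain ⟨a₀, rfl⟩ := hj x
  exact exists_map_eq_of_mk_eq_mk istar jstar ipush hpush hself (hbx.trans (hφ a₀))
end

section
/- In the polynomial ring R = ℤ[1/6][t₁, t₂, s], let σ be the ring automorphism fixing s and exchanging t₁ and t₂, and let R^σ be the subring of σ-invariant elements (equal to ℤ[1/6][t₁+t₂, t₁t₂, s]). Let I be the ideal of R generated by 2s(2s−t₁) and 2s(2s−t₂). Then the intersection I ∩ R^σ is precisely the ideal of R^σ generated by the two elements 2s(4s−(t₁+t₂)) and 2s(2s−t₁)(2s−t₂) = 2s(4s² − 2s(t₁+t₂) + t₁t₂). -/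
open MvPolynomial

/-!
Put `f₁ = 2s(2s - t₁)` and `f₂ = σ f₁ = 2s(2s - t₂)`. Averaging a representation
`x = u f₁ + v f₂` of an invariant `x` with its image under `σ` gives `x = p f₁ + σ p f₂` with
`p = (u + σ v) / 2`. The anti-invariant `p - σ p` vanishes on `t₁ = t₂`, so it equals
`(t₁ - t₂) c` with `c` invariant, and then
`x = ((p + σ p) / 2) g₁ + (c / 2) (4 g₂ - (4s - (t₁ + t₂)) g₁)`, because
`f₁ - f₂ = -2s (t₁ - t₂)` and `4 g₂ - (4s - (t₁ + t₂)) g₁ = -2s (t₁ - t₂)²`.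
-/

theorem MvPolynomial.X_sub_X_dvd_sub_rename_swap {R ι : Type*} [CommRing R] [DecidableEq ι]
    (i j : ι) (p : MvPolynomial ι R) : X i - X j ∣ p - rename (Equiv.swap i j) p := by
  induction p using MvPolynomial.induction_on with
  | C a => simp
  | add p q hp hq => simpa only [map_add, add_sub_add_comm] using dvd_add hp hq
  | mul_X p k hp =>
    have hk : X i - X j ∣ (X k - X (Equiv.swap i j k) : MvPolynomial ι R) := by
      rcases eq_or_ne k i with rfl | hki
      · simp
      rcases eq_or_ne k j with rfl | hkj
      · exact ⟨-1, by rw [Equiv.swap_apply_right]; ring⟩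
      · simp [Equiv.swap_apply_of_ne_of_ne hki hkj]
    have hsplit : p * X k - rename (Equiv.swap i j) (p * X k) =
        (p - rename (Equiv.swap i j) p) * X k +
          rename (Equiv.swap i j) p * (X k - X (Equiv.swap i j k)) := by
      rw [map_mul, rename_X]; ring
    rw [hsplit]
    exact dvd_add (dvd_mul_of_dvd_left hp _) (dvd_mul_of_dvd_right hk _)

section Involution

variable {A : Type*} [CommRing A] (τ : A →+* A)

theorem RingHom.map_invOf_two [Invertible (2 : A)] : τ ⅟2 = ⅟2 :=
  (invOf_eq_left_inv <| by
    simpa only [map_mul, map_ofNat, map_one] using congrArg τ (invOf_mul_self (2 : A))).symm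

variable {τ}

theorem exists_eq_mul_add_apply_mul_of_mem_span_pair [Invertible (2 : A)]
    (hτ : Function.Involutive τ) {f x : A} (hx : τ x = x) (hmem : x ∈ Ideal.span {f, τ f}) :
    ∃ p, x = p * f + τ p * τ f := by
  obtain ⟨u, v, rfl⟩ := Ideal.mem_span_pair.mp hmem
  refine ⟨⅟2 * (u + τ v), ?_⟩
  simp only [map_add, map_mul, hτ _] at hx
  rw [map_mul, τ.map_invOf_two, map_add, hτ]
  linear_combination (-⅟2 : A) * hx - (u * f + v * τ f) * mul_invOf_self (2 : A)

theorem exists_apply_eq_self_and_sub_apply_eq_mul [IsDomain A] (hτ : Function.Involutive τ)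
    {d p : A} (hd : τ d = -d) (hd0 : d ≠ 0) (hdvd : d ∣ p - τ p) :
    ∃ c, τ c = c ∧ p - τ p = d * c := by
  obtain ⟨c, hc⟩ := hdvd
  refine ⟨c, mul_left_cancel₀ hd0 ?_, hc⟩
  have hτc := congrArg τ hc
  rw [map_sub, hτ, map_mul, hd] at hτc
  linear_combination hτc + hc

end Involution

section SwapInvariants

variable {A : Type*} [CommRing A] {τ : A →+* A} {t₁ t₂ s : A}

theorem exists_fixed_mul_add_fixed_mul_of_mem_span [IsDomain A] [Invertible (2 : A)]
    (hτ : Function.Involutive τ) (ht : τ t₁ = t₂) (hs : τ s = s) (ht₁₂ : t₁ ≠ t₂)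
    (hdvd : ∀ p, t₁ - t₂ ∣ p - τ p) {x : A} (hx : τ x = x)
    (hmem : x ∈ Ideal.span {2 * s * (2 * s - t₁), 2 * s * (2 * s - t₂)}) :
    ∃ a b, τ a = a ∧ τ b = b ∧ x = a * (2 * s * (4 * s - (t₁ + t₂))) +
      b * (2 * s * (4 * s ^ 2 - 2 * s * (t₁ + t₂) + t₁ * t₂)) := by
  have ht₂ : τ t₂ = t₁ := ht ▸ hτ t₁
  have hf : τ (2 * s * (2 * s - t₁)) = 2 * s * (2 * s - t₂) := by simp [map_ofNat, ht, hs]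
  rw [← hf] at hmem
  obtain ⟨p, hp⟩ := exists_eq_mul_add_apply_mul_of_mem_span_pair hτ hx hmem
  obtain ⟨c, hc, hpc⟩ := exists_apply_eq_self_and_sub_apply_eq_mul hτ (d := t₁ - t₂)
    (by rw [map_sub, ht, ht₂, neg_sub]) (sub_ne_zero.mpr ht₁₂) (hdvd p)
  refine ⟨⅟2 * (p + τ p) - ⅟2 * c * (4 * s - (t₁ + t₂)), 2 * c, ?_, by simp [map_ofNat, hc], ?_⟩
  · simp only [map_sub, map_mul, map_add, map_ofNat, τ.map_invOf_two, hτ p, hc, hs, ht, ht₂]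
    ring
  · rw [hf] at hp
    linear_combination hp + ⅟2 * (2 * s * (t₂ - t₁)) * hpc
      + (2 * c * (2 * s * (4 * s ^ 2 - 2 * s * (t₁ + t₂) + t₁ * t₂))
        - (p * (2 * s * (2 * s - t₁)) + τ p * (2 * s * (2 * s - t₂)))) * mul_invOf_self (2 : A)

theorem mul_add_mul_mem_span (a b : A) :
    a * (2 * s * (4 * s - (t₁ + t₂))) + b * (2 * s * (4 * s ^ 2 - 2 * s * (t₁ + t₂) + t₁ * t₂))
      ∈ Ideal.span {2 * s * (2 * s - t₁), 2 * s * (2 * s - t₂)} :=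
  Ideal.mem_span_pair.mpr ⟨a + b * (2 * s - t₂), a, by ring⟩

theorem mem_span_iff_exists_fixed_mul_add_fixed_mul [IsDomain A] [Invertible (2 : A)]
    (hτ : Function.Involutive τ) (ht : τ t₁ = t₂) (hs : τ s = s) (ht₁₂ : t₁ ≠ t₂)
    (hdvd : ∀ p, t₁ - t₂ ∣ p - τ p) {x : A} (hx : τ x = x) :
    x ∈ Ideal.span {2 * s * (2 * s - t₁), 2 * s * (2 * s - t₂)} ↔
      ∃ a b, τ a = a ∧ τ b = b ∧ x = a * (2 * s * (4 * s - (t₁ + t₂))) +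
        b * (2 * s * (4 * s ^ 2 - 2 * s * (t₁ + t₂) + t₁ * t₂)) :=
  ⟨exists_fixed_mul_add_fixed_mul_of_mem_span hτ ht hs ht₁₂ hdvd hx,
    fun ⟨a, b, _, _, h⟩ => h ▸ mul_add_mul_mem_span a b⟩

end SwapInvariants

/-- In `R = ℤ[1/6][t₁, t₂, s]` (polynomial ring over the localization of `ℤ` away from `6`),
let `σ` be the ring automorphism fixing `s = X 2` and exchanging `t₁ = X 0` and `t₂ = X 1`.
Let `I` be the ideal generated by `2s(2s−t₁)` and `2s(2s−t₂)`.  Then the two elements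
`g₁ = 2s(4s−(t₁+t₂))` and `g₂ = 2s(4s²−2s(t₁+t₂)+t₁t₂)` are `σ`-invariant, and the
intersection `I ∩ R^σ` is precisely the ideal of the invariant subring `R^σ` generated by
`g₁` and `g₂`. -/
theorem stmt2 :
    letI R16 := Localization.Away (6 : ℤ)
    letI R := MvPolynomial (Fin 3) R16
    letI σ : R ≃ₐ[R16] R := renameEquiv R16 (Equiv.swap (0 : Fin 3) 1)
    letI t₁ : R := X 0
    letI t₂ : R := X 1
    letI s : R := X 2
    letI I : Ideal R := Ideal.span {2 * s * (2 * s - t₁), 2 * s * (2 * s - t₂)}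
    letI g₁ : R := 2 * s * (4 * s - (t₁ + t₂))
    letI g₂ : R := 2 * s * (4 * s ^ 2 - 2 * s * (t₁ + t₂) + t₁ * t₂)
    σ g₁ = g₁ ∧ σ g₂ = g₂ ∧
      ∀ x : R, σ x = x →
        (x ∈ I ↔ ∃ a b : R, σ a = a ∧ σ b = b ∧ x = a * g₁ + b * g₂) := by
  have : IsDomain (Localization.Away (6 : ℤ)) := IsLocalization.isDomain_localization
    (powers_le_nonZeroDivisors_of_noZeroDivisors (by norm_num))
  have h2 : IsUnit (2 : MvPolynomial (Fin 3) (Localization.Away (6 : ℤ))) := by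
    simpa only [map_ofNat] using
      (IsLocalization.Away.isUnit_of_dvd (6 : ℤ) (by norm_num : (2 : ℤ) ∣ 6)).map
        (C : Localization.Away (6 : ℤ) →+* _)
  let _ := h2.invertible
  set σ := renameEquiv (Localization.Away (6 : ℤ)) (Equiv.swap (0 : Fin 3) 1)
  have hσ : Function.Involutive σ := fun p => by
    simp [σ, rename_rename, ← Equiv.coe_trans]
  have ht₁ : σ (X 0) = X 1 := by simp [σ]
  have ht₂ : σ (X 1) = X 0 := by simp [σ]
  have hs : σ (X 2) = X 2 := by simp [σ, Equiv.swap_apply_of_ne_of_ne]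
  refine ⟨by simp [map_ofNat, ht₁, ht₂, hs, add_comm],
    by simp [map_ofNat, ht₁, ht₂, hs, add_comm, mul_comm], fun x hx => ?_⟩
  have h01 : (X 0 : MvPolynomial (Fin 3) (Localization.Away (6 : ℤ))) ≠ X 1 :=
    X_injective.ne (by decide)
  exact mem_span_iff_exists_fixed_mul_add_fixed_mul (τ := (σ : _ →+* _)) hσ ht₁ hs h01
    (X_sub_X_dvd_sub_rename_swap 0 1) hx
end

section
/- In the polynomial ring ℤ[1/6][λ₁, λ₂, λ₃], define p₂ = 12λ₁⁴ − 44λ₁²λ₂ + 92λ₁λ₃, p₁ = −14λ₁³λ₂ + 2λ₁²λ₃ + 48λ₁λ₂² − 96λ₂λ₃, p₀ = 15λ₁³λ₃ − 52λ₁λ₂λ₃ + 112λ₃², and z₂ = −1152λ₁³λ₃² + 256λ₁²λ₂²λ₃ + 5824λ₁λ₂λ₃² − 1152λ₂³λ₃ − 10976λ₃³. Then z₂ does not belong to the ideal generated by p₀, p₁, and p₂. -/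
/-!
Evaluate at the first-order point `(λ₁, λ₂, λ₃) = (2ε, 1, ε)` with coefficients in the dual
numbers `ℚ[ε]`, `ε² = 0`. Every monomial of `p₀, p₁, p₂` other than `λ₁λ₂²` and `λ₂λ₃` has
`ε`-degree at least two, and those two cancel in `p₁`, so all generators vanish there; but `z₂`
evaluates to `-1152 ε ≠ 0`, its only monomial of `ε`-degree one being `λ₂³λ₃`.
-/

open MvPolynomial DualNumber

theorem Ideal.notMem_span_of_map_eq_zero {R S : Type*} [Semiring R] [Semiring S] (φ : R →+* S)
    {s : Set R} {z : R} (hs : ∀ x ∈ s, φ x = 0) (hz : φ z ≠ 0) : z ∉ Ideal.span s :=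
  fun h => hz (Ideal.span_le.2 (fun x hx => RingHom.mem_ker.2 (hs x hx)) h)

theorem DualNumber.eps_pow_eq_zero_of_two_le {R : Type*} [Semiring R] {n : ℕ} (hn : 2 ≤ n) :
    (ε : R[ε]) ^ n = 0 :=
  pow_eq_zero_of_le hn eps_pow_two

noncomputable def tangentEval : MvPolynomial (Fin 3) (Localization.Away (6 : ℤ)) →+* ℚ[ε] :=
  eval₂Hom ((algebraMap ℚ ℚ[ε]).comp
    (Localization.awayLift (Int.castRingHom ℚ) 6 (by norm_num))) ![2 * ε, 1, ε]

@[simp] theorem tangentEval_X_zero : tangentEval (X 0) = 2 * ε := eval₂Hom_X' _ _ _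

@[simp] theorem tangentEval_X_one : tangentEval (X 1) = 1 := eval₂Hom_X' _ _ _

@[simp] theorem tangentEval_X_two : tangentEval (X 2) = ε := eval₂Hom_X' _ _ _

/-- In the polynomial ring `ℤ[1/6][λ₁, λ₂, λ₃]` (over the localization of `ℤ` away from `6`),
with `λ₁ = X 0`, `λ₂ = X 1`, `λ₃ = X 2`, the element
`z₂ = −1152λ₁³λ₃² + 256λ₁²λ₂²λ₃ + 5824λ₁λ₂λ₃² − 1152λ₂³λ₃ − 10976λ₃³` does not belong to
the ideal generated by
`p₀ = 15λ₁³λ₃ − 52λ₁λ₂λ₃ + 112λ₃²`,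
`p₁ = −14λ₁³λ₂ + 2λ₁²λ₃ + 48λ₁λ₂² − 96λ₂λ₃`, and
`p₂ = 12λ₁⁴ − 44λ₁²λ₂ + 92λ₁λ₃`. -/
theorem stmt11 :
    letI R16 := Localization.Away (6 : ℤ)
    letI R := MvPolynomial (Fin 3) R16
    letI l₁ : R := X 0
    letI l₂ : R := X 1
    letI l₃ : R := X 2
    letI p₂ : R := 12 * l₁ ^ 4 - 44 * l₁ ^ 2 * l₂ + 92 * l₁ * l₃
    letI p₁ : R := -14 * l₁ ^ 3 * l₂ + 2 * l₁ ^ 2 * l₃ + 48 * l₁ * l₂ ^ 2 - 96 * l₂ * l₃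
    letI p₀ : R := 15 * l₁ ^ 3 * l₃ - 52 * l₁ * l₂ * l₃ + 112 * l₃ ^ 2
    letI z₂ : R := -1152 * l₁ ^ 3 * l₃ ^ 2 + 256 * l₁ ^ 2 * l₂ ^ 2 * l₃ +
      5824 * l₁ * l₂ * l₃ ^ 2 - 1152 * l₂ ^ 3 * l₃ - 10976 * l₃ ^ 3
    z₂ ∉ Ideal.span ({p₀, p₁, p₂} : Set R) := by
  refine Ideal.notMem_span_of_map_eq_zero tangentEval ?_ ?_
  · rintro p (rfl | rfl | rfl) <;>
    · simp only [map_add, map_sub, map_mul, map_neg, map_pow, map_ofNat, tangentEval_X_zero,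
        tangentEval_X_one, tangentEval_X_two]
      ring_nf
      simp [eps_pow_eq_zero_of_two_le]
  · have hz : tangentEval (-1152 * X 0 ^ 3 * X 2 ^ 2 + 256 * X 0 ^ 2 * X 1 ^ 2 * X 2 +
        5824 * X 0 * X 1 * X 2 ^ 2 - 1152 * X 1 ^ 3 * X 2 - 10976 * X 2 ^ 3) = -(ε * 1152) := by
      simp only [map_add, map_sub, map_mul, map_neg, map_pow, map_ofNat, tangentEval_X_zero,
        tangentEval_X_one, tangentEval_X_two]
      ring_nf
      simp [eps_pow_eq_zero_of_two_le]
    rw [hz, ne_eq, neg_eq_zero]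
    intro h
    have h1152 := congrArg TrivSqZeroExt.snd h
    rw [snd_mul, ← Nat.cast_ofNat, TrivSqZeroExt.fst_natCast] at h1152
    simp at h1152
end

section
/- Let k be a field, and consider the action of GL₃(k) on homogeneous quadratic forms in three variables given by (A·f)(v) = det(A)·f(A⁻¹v). The stabilizer of the quadratic form q(x,y,z) = xy under this action consists exactly of the invertible matrices of the form [[a,0,0],[0,d,0],[e,g,1]] with a, d ∈ kˣ and e, g ∈ k, together with the matrices of the form [[0,b,0],[c,0,0],[e,g,−1]] with b, c ∈ kˣ and e, g ∈ k. -/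
/-!
Write `N = A⁻¹`. Since `A⁻¹` sends `x` and `y` to the linear forms `ℓ₀ = ∑ⱼ N₀ⱼ Xⱼ` and
`ℓ₁ = ∑ⱼ N₁ⱼ Xⱼ`, the matrix `A` fixes `xy` iff `det A · ℓ₀ ℓ₁ = xy`. Comparing the coefficients
of the six quadratic monomials forces `ℓ₀, ℓ₁` to be multiples of `x, y` or of `y, x`, and then
`det A · det N = 1` pins the corner entry `N₂₂` to `1`, resp. `-1`. Each of the two resulting
shapes of matrices is closed under inversion, so the same description holds for `A = N⁻¹`.
-/

open MvPolynomial Matrix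

section Polynomial

variable {R : Type*} [CommSemiring R]

lemma C_mul_linear_mul_linear (D : R) (u v : Fin 3 → R) :
    C D * ((∑ j, C (u j) * X j) * (∑ j, C (v j) * X j) : MvPolynomial (Fin 3) R) =
      C (D * (u 0 * v 0)) * (X 0 * X 0) + C (D * (u 1 * v 1)) * (X 1 * X 1) +
        C (D * (u 2 * v 2)) * (X 2 * X 2) + C (D * (u 0 * v 1 + u 1 * v 0)) * (X 0 * X 1) +
        C (D * (u 0 * v 2 + u 2 * v 0)) * (X 0 * X 2) +
        C (D * (u 1 * v 2 + u 2 * v 1)) * (X 1 * X 2) := by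
  simp only [Fin.sum_univ_three, C_mul, C_add]
  ring

lemma C_mul_linear_mul_linear_eq_X_mul_X_iff (D : R) (u v : Fin 3 → R) :
    C D * ((∑ j, C (u j) * X j) * (∑ j, C (v j) * X j)) = (X 0 * X 1 : MvPolynomial (Fin 3) R) ↔
      D * (u 0 * v 0) = 0 ∧ D * (u 1 * v 1) = 0 ∧ D * (u 2 * v 2) = 0 ∧
        D * (u 0 * v 1 + u 1 * v 0) = 1 ∧ D * (u 0 * v 2 + u 2 * v 0) = 0 ∧
        D * (u 1 * v 2 + u 2 * v 1) = 0 := by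
  rw [C_mul_linear_mul_linear]
  constructor
  · intro h
    have coeff_eq (i j : Fin 3) := congrArg (coeff (Finsupp.single i 1 + Finsupp.single j 1)) h
    simp only [X, C_mul_monomial, monomial_mul, coeff_add, coeff_monomial, mul_one] at coeff_eq
    refine ⟨?_, ?_, ?_, ?_, ?_, ?_⟩
    · simpa [Finsupp.ext_iff, Fin.forall_fin_succ] using coeff_eq 0 0
    · simpa [Finsupp.ext_iff, Fin.forall_fin_succ] using coeff_eq 1 1
    · simpa [Finsupp.ext_iff, Fin.forall_fin_succ] using coeff_eq 2 2
    · simpa [Finsupp.ext_iff, Fin.forall_fin_succ] using coeff_eq 0 1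
    · simpa [Finsupp.ext_iff, Fin.forall_fin_succ] using coeff_eq 0 2
    · simpa [Finsupp.ext_iff, Fin.forall_fin_succ] using coeff_eq 1 2
  · rintro ⟨h00, h11, h22, h01, h02, h12⟩
    simp [h00, h11, h22, h01, h02, h12]

end Polynomial

section Field

variable {k : Type*} [Field k]

lemma linear_coeff_conditions_iff {D : k} (hD : D ≠ 0) (u v : Fin 3 → k) :
    (D * (u 0 * v 0) = 0 ∧ D * (u 1 * v 1) = 0 ∧ D * (u 2 * v 2) = 0 ∧
        D * (u 0 * v 1 + u 1 * v 0) = 1 ∧ D * (u 0 * v 2 + u 2 * v 0) = 0 ∧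
        D * (u 1 * v 2 + u 2 * v 1) = 0) ↔
      (u 1 = 0 ∧ u 2 = 0 ∧ v 0 = 0 ∧ v 2 = 0 ∧ D * (u 0 * v 1) = 1) ∨
        (u 0 = 0 ∧ u 2 = 0 ∧ v 1 = 0 ∧ v 2 = 0 ∧ D * (u 1 * v 0) = 1) := by
  simp only [mul_eq_zero, hD, false_or]
  constructor
  · rintro ⟨h00, h11, h22, h01, h02, h12⟩
    have hu2 : u 2 = 0 := by
      by_contra hu2
      have hv2 : v 2 = 0 := h22.resolve_left hu2
      have : v 0 = 0 := by simpa [hv2, hu2] using h02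
      have : v 1 = 0 := by simpa [hv2, hu2] using h12
      simp_all
    have hv2 : v 2 = 0 := by
      by_contra hv2
      have : u 0 = 0 := by simpa [hv2, hu2] using h02
      have : u 1 = 0 := by simpa [hv2, hu2] using h12
      simp_all
    by_cases hu0 : u 0 = 0
    · right
      have hv1 : v 1 = 0 := h11.resolve_left fun _ => by simp_all
      simp_all
    · left
      have hv0 : v 0 = 0 := h00.resolve_left hu0
      have hu1 : u 1 = 0 := h11.resolve_right fun _ => by simp_all
      simp_all
  · rintro (⟨hu1, hu2, hv0, hv2, h⟩ | ⟨hu0, hu2, hv1, hv2, h⟩) <;> simp_all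

def IsDiagonalType (M : Matrix (Fin 3) (Fin 3) k) : Prop :=
  ∃ a d e g : k, a ≠ 0 ∧ d ≠ 0 ∧ M = !![a, 0, 0; 0, d, 0; e, g, 1]

def IsSwapType (M : Matrix (Fin 3) (Fin 3) k) : Prop :=
  ∃ b c e g : k, b ≠ 0 ∧ c ≠ 0 ∧ M = !![0, b, 0; c, 0, 0; e, g, -1]

lemma IsDiagonalType.of_mul_eq_one {M N : Matrix (Fin 3) (Fin 3) k} (hM : IsDiagonalType M)
    (hMN : M * N = 1) : IsDiagonalType N := by
  obtain ⟨a, d, e, g, ha, hd, rfl⟩ := hM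
  have hinv : !![a⁻¹, 0, 0; 0, d⁻¹, 0; -(e * a⁻¹), -(g * d⁻¹), 1] * !![a, 0, 0; 0, d, 0; e, g, 1]
      = 1 := by
    ext i j
    fin_cases i <;> fin_cases j <;> simp [ha, hd]
  exact ⟨a⁻¹, d⁻¹, -(e * a⁻¹), -(g * d⁻¹), inv_ne_zero ha, inv_ne_zero hd,
    (left_inv_eq_right_inv hinv hMN).symm⟩

lemma IsSwapType.of_mul_eq_one {M N : Matrix (Fin 3) (Fin 3) k} (hM : IsSwapType M)
    (hMN : M * N = 1) : IsSwapType N := by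
  obtain ⟨b, c, e, g, hb, hc, rfl⟩ := hM
  have hinv : !![0, c⁻¹, 0; b⁻¹, 0, 0; g * b⁻¹, e * c⁻¹, -1] * !![0, b, 0; c, 0, 0; e, g, -1]
      = 1 := by
    ext i j
    fin_cases i <;> fin_cases j <;> simp [hb, hc]
  exact ⟨c⁻¹, b⁻¹, g * b⁻¹, e * c⁻¹, inv_ne_zero hc, inv_ne_zero hb,
    (left_inv_eq_right_inv hinv hMN).symm⟩

lemma isDiagonalType_iff_of_mul_eq_one {M N : Matrix (Fin 3) (Fin 3) k} (hMN : M * N = 1) :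
    IsDiagonalType M ↔ IsDiagonalType N :=
  ⟨fun h => h.of_mul_eq_one hMN, fun h => h.of_mul_eq_one (mul_eq_one_comm.mp hMN)⟩

lemma isSwapType_iff_of_mul_eq_one {M N : Matrix (Fin 3) (Fin 3) k} (hMN : M * N = 1) :
    IsSwapType M ↔ IsSwapType N :=
  ⟨fun h => h.of_mul_eq_one hMN, fun h => h.of_mul_eq_one (mul_eq_one_comm.mp hMN)⟩

lemma isDiagonalType_iff {D : k} {N : Matrix (Fin 3) (Fin 3) k} (hD : D * N.det = 1) :
    IsDiagonalType N ↔
      N 0 1 = 0 ∧ N 0 2 = 0 ∧ N 1 0 = 0 ∧ N 1 2 = 0 ∧ D * (N 0 0 * N 1 1) = 1 := by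
  rw [det_fin_three] at hD
  constructor
  · rintro ⟨a, d, e, g, -, -, rfl⟩
    simp_all
  · rintro ⟨h01, h02, h10, h12, h⟩
    have h22 : N 2 2 = 1 := by
      simp only [h01, h02, h10, h12] at hD
      linear_combination hD - N 2 2 * h
    obtain ⟨h00, h11⟩ := mul_ne_zero_iff.mp (right_ne_zero_of_mul_eq_one h)
    refine ⟨N 0 0, N 1 1, N 2 0, N 2 1, h00, h11, ?_⟩
    ext i j
    fin_cases i <;> fin_cases j <;> simp [h01, h02, h10, h12, h22]

lemma isSwapType_iff {D : k} {N : Matrix (Fin 3) (Fin 3) k} (hD : D * N.det = 1) :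
    IsSwapType N ↔
      N 0 0 = 0 ∧ N 0 2 = 0 ∧ N 1 1 = 0 ∧ N 1 2 = 0 ∧ D * (N 0 1 * N 1 0) = 1 := by
  rw [det_fin_three] at hD
  constructor
  · rintro ⟨b, c, e, g, -, -, rfl⟩
    simp_all
  · rintro ⟨h00, h02, h11, h12, h⟩
    have h22 : N 2 2 = -1 := by
      simp only [h00, h02, h11, h12] at hD
      linear_combination -hD - N 2 2 * h
    obtain ⟨h01, h10⟩ := mul_ne_zero_iff.mp (right_ne_zero_of_mul_eq_one h)
    refine ⟨N 0 1, N 1 0, N 2 0, N 2 1, h01, h10, ?_⟩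
    ext i j
    fin_cases i <;> fin_cases j <;> simp [h00, h02, h11, h12, h22]

end Field

/-- Let `k` be a field and let `GL₃(k)` act on homogeneous quadratic forms in three variables
by `(A·f)(v) = det(A)·f(A⁻¹v)`.  The stabilizer of the quadratic form `q(x,y,z) = xy`
consists exactly of the invertible matrices `[[a,0,0],[0,d,0],[e,g,1]]` with `a, d ∈ kˣ`,
`e, g ∈ k`, together with the matrices `[[0,b,0],[c,0,0],[e,g,−1]]` with `b, c ∈ kˣ`,
`e, g ∈ k`. -/
theorem stmt12 (k : Type) [Field k] (A : GL (Fin 3) k) :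
    (C ((A : Matrix (Fin 3) (Fin 3) k).det) *
        aeval (fun i : Fin 3 =>
          ∑ j : Fin 3, C (((A⁻¹ : GL (Fin 3) k) : Matrix (Fin 3) (Fin 3) k) i j) * X j)
          ((X 0 * X 1 : MvPolynomial (Fin 3) k))
      = (X 0 * X 1 : MvPolynomial (Fin 3) k)) ↔
    ((∃ a d e g : k, a ≠ 0 ∧ d ≠ 0 ∧
        (A : Matrix (Fin 3) (Fin 3) k) = !![a, 0, 0; 0, d, 0; e, g, 1]) ∨
      (∃ b c e g : k, b ≠ 0 ∧ c ≠ 0 ∧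
        (A : Matrix (Fin 3) (Fin 3) k) = !![0, b, 0; c, 0, 0; e, g, -1])) := by
  set M : Matrix (Fin 3) (Fin 3) k := ↑A
  set N : Matrix (Fin 3) (Fin 3) k := ↑A⁻¹
  have hMN : M * N = 1 := by simp [M, N]
  have hdet : M.det * N.det = 1 := by rw [← det_mul, hMN, det_one]
  change _ ↔ IsDiagonalType M ∨ IsSwapType M
  rw [map_mul, aeval_X, aeval_X, C_mul_linear_mul_linear_eq_X_mul_X_iff,
    linear_coeff_conditions_iff (left_ne_zero_of_mul_eq_one hdet),
    isDiagonalType_iff_of_mul_eq_one hMN, isSwapType_iff_of_mul_eq_one hMN,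
    isDiagonalType_iff hdet, isSwapType_iff hdet]
end

section
/- Let R₀ be a commutative ring and A, B, C commutative R₀-algebras with ring homomorphisms i* : A → B and j* : A → C of R₀-algebras, j* surjective, and an additive map i_* : B → A satisfying the projection formula i_*(i*(a)·b) = a·i_*(b), with ker(j*) = i_*(B), and such that c ∈ B is a non-zero-divisor with i*(i_*(b)) = c·b for all b ∈ B. Let P = R₀[X₁,…,X_r, Z] and Q = R₀[Y₁,…,Y_s] be polynomial rings, and suppose given R₀-algebra homomorphisms η : P → A, η_Z : P → Q, and a : Q → B such that: η(Z) = i_*(1); a ∘ η_Z = i* ∘ η; a is surjective with ker(a) generated by q'₁,…,q'_m; η_Z is surjective with ker(η_Z) generated by v₁,…,v_l; the composite of η with j*, restricted to R₀[X₁,…,X_r], is surjective onto C with kernel generated by p₁,…,p_n ∈ R₀[X₁,…,X_r]. Suppose moreover that γ ∈ Q satisfies a(γ) = c, that g'₁,…,g'_n ∈ Q satisfy η_Z(p_h) + g'_h·γ ∈ (q'₁,…,q'_m) for each h, and that q_h, g_h ∈ P satisfy η_Z(q_h) = q'_h and η_Z(g_h) = g'_h. Then ker(η) is the ideal of P generated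 by the elements Z·q₁, …, Z·q_m, Z·v₁, …, Z·v_l, and p₁ + Z·g₁, …, p_n + Z·g_n. -/
/-!
Split `f ∈ R₀[X][Z]` as `f₀(X) + Z·w`. If `η f = 0` then `j*η f₀ = 0`, so `f₀ = Σ αₕ pₕ`;
the elements `pₕ + Z·gₕ` lie in `ker η` because they are killed by `j*` (so they are `i_* b`) and
by `i*` (so `c·b = 0`). Subtracting `Σ αₕ (pₕ + Z·gₕ)` leaves `Z·w' ∈ ker η`. By the projection
formula `η (Z·w') = i_* (i* η w')`, and `i_*` is injective since `c` is a non-zero-divisor, so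
`η_Z w' ∈ ker a = η_Z (q₁,…,q_m)`, i.e. `w' ∈ (q₁,…,q_m) + ker η_Z = (q₁,…,q_m, v₁,…,v_l)`.
-/

open MvPolynomial

lemma MvPolynomial.exists_eq_rename_some_add_X_none_mul {R σ : Type*} [CommRing R]
    (f : MvPolynomial (Option σ) R) :
    ∃ w, f = rename some (aeval (fun o : Option σ => o.elim 0 X) f) + X none * w := by
  induction f using MvPolynomial.induction_on with
  | C t => exact ⟨0, by simp⟩
  | add f g hf hg =>
    obtain ⟨w₁, hw₁⟩ := hf
    obtain ⟨w₂, hw₂⟩ := hg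
    refine ⟨w₁ + w₂, ?_⟩
    rw [map_add, map_add]
    conv_lhs => rw [hw₁, hw₂]
    ring
  | mul_X f i hf =>
    obtain ⟨w, hw⟩ := hf
    cases i with
    | none => exact ⟨f, by simp [mul_comm]⟩
    | some j =>
      refine ⟨w * X (some j), ?_⟩
      rw [map_mul, aeval_X, Option.elim_some, map_mul, rename_X]
      conv_lhs => rw [hw]
      ring

lemma Ideal.comap_span_range_comp_of_surjective {R S F ι : Type*} [CommRing R] [CommRing S]
    [FunLike F R S] [RingHomClass F R S] {f : F} (hf : Function.Surjective f) (q : ι → R) :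
    comap f (span (Set.range (f ∘ q))) = span (Set.range q) ⊔ RingHom.ker f := by
  rw [Set.range_comp, ← map_span, comap_map_of_surjective' f hf]

lemma Ideal.span_singleton_mul_span_range {R ι : Type*} [CommRing R] (y : R) (q : ι → R) :
    span {y} * span (Set.range q) = span (Set.range fun i => y * q i) := by
  rw [span_mul_span', Set.singleton_mul, ← Set.range_comp]
  rfl

namespace MvPolynomial

variable {R σ ι : Type*} [CommRing R]

lemma ideal_eq_span_X_none_mul_sup_span (K J : Ideal (MvPolynomial (Option σ) R))
    (p : ι → MvPolynomial σ R) (g : ι → MvPolynomial (Option σ) R)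
    (hZ : ∀ x, X none * x ∈ K ↔ x ∈ J)
    (hpg : ∀ h, rename some (p h) + X none * g h ∈ K)
    (hconst : ∀ f₀ w, rename some f₀ + X none * w ∈ K → f₀ ∈ Ideal.span (Set.range p)) :
    K = Ideal.span {X none} * J ⊔
      Ideal.span (Set.range fun h => rename some (p h) + X none * g h) := by
  set L := Ideal.span (Set.range fun h => rename some (p h) + X none * g h)
  have hLK : L ≤ K := Ideal.span_le.2 (Set.range_subset_iff.2 hpg)
  have hZJK : Ideal.span {X none} * J ≤ K :=
    Ideal.span_singleton_mul_le_iff.2 fun x hx => (hZ x).2 hx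
  have hmap : (Ideal.span (Set.range p)).map (rename (R := R) some) ≤
      L ⊔ Ideal.span {X none} := by
    rw [Ideal.map_span, Ideal.span_le]
    rintro _ ⟨_, ⟨h, rfl⟩, rfl⟩
    rw [← add_sub_cancel_right (rename some (p h)) (X none * g h)]
    exact sub_mem (Ideal.mem_sup_left (Ideal.subset_span ⟨h, rfl⟩))
      (Ideal.mem_sup_right (Ideal.mem_span_singleton.2 (dvd_mul_right _ _)))
  refine le_antisymm (fun f hf => ?_) (sup_le hZJK hLK)
  obtain ⟨w, hw⟩ := exists_eq_rename_some_add_X_none_mul f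
  have hren := hmap (Ideal.mem_map_of_mem _ (hconst _ w (hw ▸ hf)))
  obtain ⟨l, hl, _, hz, hlz⟩ := Submodule.mem_sup.1 hren
  obtain ⟨u, rfl⟩ := Ideal.mem_span_singleton'.1 hz
  have hf' : f = X none * (u + w) + l := by rw [hw, ← hlz]; ring
  have hZK : X none * (u + w) ∈ K := by
    rw [show X none * (u + w) = f - l by rw [hf']; ring]
    exact sub_mem hf (hLK hl)
  rw [hf']
  exact add_mem (Ideal.mem_sup_left (Ideal.mul_mem_mul (Ideal.mem_span_singleton_self _)
    ((hZ _).1 hZK))) (Ideal.mem_sup_right hl)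

end MvPolynomial

section Gluing

variable {R₀ S Q A B C : Type*} [CommRing R₀] [CommRing S] [CommRing Q] [CommRing A]
  [CommRing B] [CommRing C] [Algebra R₀ S] [Algebra R₀ Q] [Algebra R₀ A] [Algebra R₀ B]
  [Algebra R₀ C] {istar : A →ₐ[R₀] B} {ipush : B →+ A} {c : B}

lemma eq_zero_of_mem_range_of_map_eq_zero (hself : ∀ b, istar (ipush b) = c * b)
    (hreg : ∀ b, c * b = 0 → b = 0) {y : A} (hy : y ∈ Set.range ipush) (hiy : istar y = 0) :
    y = 0 := by
  obtain ⟨b, rfl⟩ := hy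
  rw [hreg b (hself b ▸ hiy), map_zero]

lemma map_mul_eq_ipush (hproj : ∀ a b, ipush (istar a * b) = a * ipush b)
    {η : S →ₐ[R₀] A} {z : S} (hz : η z = ipush 1) (x : S) :
    η (z * x) = ipush (istar (η x)) := by
  rw [map_mul, hz, mul_comm, ← mul_one (istar (η x)), hproj]

lemma jstar_map_mul_eq_zero {jstar : A →ₐ[R₀] C}
    (hker : ∀ y, jstar y = 0 ↔ y ∈ Set.range ipush)
    (hproj : ∀ a b, ipush (istar a * b) = a * ipush b) {η : S →ₐ[R₀] A} {z : S}
    (hz : η z = ipush 1) (x : S) : jstar (η (z * x)) = 0 := by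
  rw [map_mul_eq_ipush hproj hz, hker]
  exact ⟨_, rfl⟩

variable {η : S →ₐ[R₀] A} {ηZ : S →ₐ[R₀] Q} {a : Q →ₐ[R₀] B} {z : S}

lemma mul_mem_ker_iff (hproj : ∀ a b, ipush (istar a * b) = a * ipush b)
    (hself : ∀ b, istar (ipush b) = c * b) (hreg : ∀ b, c * b = 0 → b = 0)
    (hz : η z = ipush 1) (hcomm : ∀ x, a (ηZ x) = istar (η x)) (x : S) :
    z * x ∈ RingHom.ker η ↔ x ∈ (RingHom.ker a).comap ηZ := by
  rw [RingHom.mem_ker, map_mul_eq_ipush hproj hz, Ideal.mem_comap, RingHom.mem_ker, hcomm]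
  refine ⟨fun h => hreg _ ?_, fun h => by rw [h, map_zero]⟩
  rw [← hself, h, map_zero]

lemma add_mul_mem_ker {jstar : A →ₐ[R₀] C} (hker : ∀ y, jstar y = 0 ↔ y ∈ Set.range ipush)
    (hproj : ∀ a b, ipush (istar a * b) = a * ipush b)
    (hself : ∀ b, istar (ipush b) = c * b) (hreg : ∀ b, c * b = 0 → b = 0)
    (hz : η z = ipush 1) (hcomm : ∀ x, a (ηZ x) = istar (η x)) {γ : Q} (hγ : a γ = c)
    {y g : S} (hy : jstar (η y) = 0) (hyg : ηZ y + ηZ g * γ ∈ RingHom.ker a) :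
    y + z * g ∈ RingHom.ker η := by
  refine eq_zero_of_mem_range_of_map_eq_zero hself hreg ((hker _).1 ?_) ?_
  · rw [map_add, map_add, hy, jstar_map_mul_eq_zero hker hproj hz, add_zero]
  · rw [map_add, map_add, map_mul_eq_ipush hproj hz, hself, ← hcomm, ← hcomm, ← hγ,
      mul_comm, ← map_mul, ← map_add]
    exact hyg

end Gluing

theorem stmt14_general (R₀ A B C : Type) [CommRing R₀] [CommRing A] [CommRing B] [CommRing C]
    [Algebra R₀ A] [Algebra R₀ B] [Algebra R₀ C]
    (istar : A →ₐ[R₀] B) (jstar : A →ₐ[R₀] C)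
    (ipush : B →+ A)
    (hproj : ∀ (a : A) (b : B), ipush (istar a * b) = a * ipush b)
    (hker : ∀ a : A, jstar a = 0 ↔ a ∈ Set.range ipush)
    (c : B)
    (hself : ∀ b : B, istar (ipush b) = c * b)
    (hreg : ∀ b : B, c * b = 0 → b = 0)
    (r s l m n : ℕ)
    (η : MvPolynomial (Option (Fin r)) R₀ →ₐ[R₀] A)
    (hZ : η (X none) = ipush 1)
    (ηZ : MvPolynomial (Option (Fin r)) R₀ →ₐ[R₀] MvPolynomial (Fin s) R₀)
    (a : MvPolynomial (Fin s) R₀ →ₐ[R₀] B)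
    (hcomm : ∀ x : MvPolynomial (Option (Fin r)) R₀, a (ηZ x) = istar (η x))
    (q' : Fin m → MvPolynomial (Fin s) R₀)
    (hkera : RingHom.ker a = Ideal.span (Set.range q'))
    (hηZsurj : Function.Surjective ηZ)
    (v : Fin l → MvPolynomial (Option (Fin r)) R₀)
    (hkerηZ : RingHom.ker ηZ = Ideal.span (Set.range v))
    (p : Fin n → MvPolynomial (Fin r) R₀)
    (hkerC : RingHom.ker
        ((jstar.comp η).comp (rename (Option.some : Fin r → Option (Fin r))))
      = Ideal.span (Set.range p))
    (γ : MvPolynomial (Fin s) R₀) (hγ : a γ = c)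
    (g' : Fin n → MvPolynomial (Fin s) R₀)
    (hg' : ∀ h : Fin n,
      ηZ (rename Option.some (p h)) + g' h * γ ∈ Ideal.span (Set.range q'))
    (q : Fin m → MvPolynomial (Option (Fin r)) R₀) (hq : ∀ h, ηZ (q h) = q' h)
    (g : Fin n → MvPolynomial (Option (Fin r)) R₀) (hg : ∀ h, ηZ (g h) = g' h) :
    RingHom.ker η = Ideal.span
      ((Set.range fun h : Fin m => X none * q h) ∪
        (Set.range fun h : Fin l => X none * v h) ∪
        (Set.range fun h : Fin n => rename Option.some (p h) + X none * g h)) := by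
  have hq' : q' = ηZ ∘ q := funext fun h => (hq h).symm
  have hZmul := mul_mem_ker_iff hproj hself hreg hZ hcomm
  rw [hkera, hq', Ideal.comap_span_range_comp_of_surjective hηZsurj, hkerηZ] at hZmul
  have hp (f₀) : jstar (η (rename some f₀)) = 0 ↔ f₀ ∈ Ideal.span (Set.range p) := by
    rw [← hkerC, RingHom.mem_ker, AlgHom.comp_apply, AlgHom.comp_apply]
  rw [Ideal.span_union, Ideal.span_union, ← Ideal.span_singleton_mul_span_range,
    ← Ideal.span_singleton_mul_span_range, ← Ideal.mul_sup]
  refine MvPolynomial.ideal_eq_span_X_none_mul_sup_span _ _ p g hZmul (fun h => ?_)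
    (fun f₀ w hf => ?_)
  · refine add_mul_mem_ker hker hproj hself hreg hZ hcomm hγ
      ((hp _).2 (Ideal.subset_span ⟨h, rfl⟩)) ?_
    rw [hg, hkera]
    exact hg' h
  · have hjf := congrArg jstar (RingHom.mem_ker.1 hf)
    rwa [map_add, map_add, jstar_map_mul_eq_zero hker hproj hZ, add_zero, map_zero, hp] at hjf

/-- **Description of the kernel in the gluing procedure (abstract form).**
With `A, B, C` commutative `R₀`-algebras playing the roles of the Chow rings of the total
stack, the closed stratum and the open complement, `ipush` the pushforward, `c` the top Chern
class of the normal bundle (a non-zero-divisor), `P = R₀[X₁,…,X_r,Z]`, `Q = R₀[Y₁,…,Y_s]`,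
`η : P → A` with `η Z = ipush 1`, `ηZ : P → Q` a surjective lifting of `istar ∘ η` along the
surjection `a : Q → B`, with `ker a` generated by the `q' h`, `ker ηZ` generated by the
`v h`, and the kernel of the restriction of `jstar ∘ η` to `R₀[X₁,…,X_r]` generated by the
`p h`; if `γ ∈ Q` satisfies `a γ = c`, the `g' h ∈ Q` satisfy
`ηZ (p h) + g' h * γ ∈ (q'₁,…,q'_m)`, and `q h, g h ∈ P` are liftings of `q' h, g' h` along
`ηZ`, then `ker η` is generated by the elements `Z * q h`, `Z * v h` and `p h + Z * g h`. -/
theorem stmt14 (R₀ A B C : Type) [CommRing R₀] [CommRing A] [CommRing B] [CommRing C]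
    [Algebra R₀ A] [Algebra R₀ B] [Algebra R₀ C]
    (istar : A →ₐ[R₀] B) (jstar : A →ₐ[R₀] C) (hj : Function.Surjective jstar)
    (ipush : B →+ A)
    (hproj : ∀ (a : A) (b : B), ipush (istar a * b) = a * ipush b)
    (hker : ∀ a : A, jstar a = 0 ↔ a ∈ Set.range ipush)
    (c : B)
    (hself : ∀ b : B, istar (ipush b) = c * b)
    (hreg : ∀ b : B, c * b = 0 → b = 0)
    (r s l m n : ℕ)
    (η : MvPolynomial (Option (Fin r)) R₀ →ₐ[R₀] A)
    (hZ : η (X none) = ipush 1)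
    (ηZ : MvPolynomial (Option (Fin r)) R₀ →ₐ[R₀] MvPolynomial (Fin s) R₀)
    (a : MvPolynomial (Fin s) R₀ →ₐ[R₀] B)
    (hcomm : ∀ x : MvPolynomial (Option (Fin r)) R₀, a (ηZ x) = istar (η x))
    (hasurj : Function.Surjective a)
    (q' : Fin m → MvPolynomial (Fin s) R₀)
    (hkera : RingHom.ker a = Ideal.span (Set.range q'))
    (hηZsurj : Function.Surjective ηZ)
    (v : Fin l → MvPolynomial (Option (Fin r)) R₀)
    (hkerηZ : RingHom.ker ηZ = Ideal.span (Set.range v))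
    (p : Fin n → MvPolynomial (Fin r) R₀)
    (hCsurj : Function.Surjective
      ((jstar.comp η).comp (rename (Option.some : Fin r → Option (Fin r)))))
    (hkerC : RingHom.ker
        ((jstar.comp η).comp (rename (Option.some : Fin r → Option (Fin r))))
      = Ideal.span (Set.range p))
    (γ : MvPolynomial (Fin s) R₀) (hγ : a γ = c)
    (g' : Fin n → MvPolynomial (Fin s) R₀)
    (hg' : ∀ h : Fin n,
      ηZ (rename Option.some (p h)) + g' h * γ ∈ Ideal.span (Set.range q'))
    (q : Fin m → MvPolynomial (Option (Fin r)) R₀) (hq : ∀ h, ηZ (q h) = q' h)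
    (g : Fin n → MvPolynomial (Option (Fin r)) R₀) (hg : ∀ h, ηZ (g h) = g' h) :
    RingHom.ker η = Ideal.span
      ((Set.range fun h : Fin m => X none * q h) ∪
        (Set.range fun h : Fin l => X none * v h) ∪
        (Set.range fun h : Fin n => rename Option.some (p h) + X none * g h)) :=
  stmt14_general R₀ A B C istar jstar ipush hproj hker c hself hreg r s l m n η hZ ηZ a hcomm q'
    hkera hηZsurj v hkerηZ p hkerC γ hγ g' hg' q hq g hg
end
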